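/- arXiv:0903.2679 — 11 statements merged into one kernel-verified Lean document; each statement's English description precedes it below -/
import Mathlib

section
/- Let P be a finite partially ordered set and let v : P → ℝ be a strictly isotone lower valuation. Then the function d_v(x,y) = v(x) + v(y) − 2·v⁻(x,y) is a metric on P: it is nonnegative, symmetric, satisfies the triangle inequality d_v(x,z) ≤ d_v(x,y) + d_v(y,z), and d_v(x,y) = 0 if and only if x = y. -/
/-! Since `P` is finite and any two elements have a common lower bound, the supremum
`v⁻(x, y) = lowerSup v x y` is attained at some `w ≤ x, y`. Nonnegativity and the separation of points follow
from monotonicity and strict monotonicity of `v` at such a `w`. For the triangle inequality,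
pick `a ≤ x, y` and `b ≤ y, z` attaining `v⁻(x, y)` and `v⁻(y, z)`; the valuation inequality
at `a, b ≤ y` gives `v⁻(x, y) + v⁻(y, z) ≤ v⁻(a, b) + v y ≤ v⁻(x, z) + v y`, which is the
triangle inequality after rearranging. -/

section LowerSup

variable {P : Type*} [PartialOrder P]

noncomputable def lowerSup (v : P → ℝ) (x y : P) : ℝ :=
  sSup (v '' {w | w ≤ x ∧ w ≤ y})

theorem lowerSup_comm (v : P → ℝ) (x y : P) : lowerSup v x y = lowerSup v y x := by
  simp only [lowerSup, and_comm]

variable [Finite P] {v : P → ℝ} {x y : P}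

theorem le_lowerSup {w : P} (hwx : w ≤ x) (hwy : w ≤ y) : v w ≤ lowerSup v x y :=
  le_csSup (Set.toFinite _).bddAbove ⟨w, ⟨hwx, hwy⟩, rfl⟩

theorem exists_lowerSup_eq (hlb : ∃ w, w ≤ x ∧ w ≤ y) :
    ∃ w, w ≤ x ∧ w ≤ y ∧ v w = lowerSup v x y := by
  obtain ⟨w₀, hw₀⟩ := hlb
  obtain ⟨w, hw, hvw⟩ :=
    Set.Nonempty.csSup_mem (s := v '' {w | w ≤ x ∧ w ≤ y}) ⟨v w₀, w₀, hw₀, rfl⟩ (Set.toFinite _)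
  exact ⟨w, hw.1, hw.2, hvw⟩

theorem lowerSup_le_left (hv : Monotone v) (hlb : ∃ w, w ≤ x ∧ w ≤ y) :
    lowerSup v x y ≤ v x := by
  obtain ⟨w, hwx, -, hvw⟩ := exists_lowerSup_eq (v := v) hlb
  exact hvw ▸ hv hwx

theorem lowerSup_self (hv : Monotone v) (x : P) : lowerSup v x x = v x :=
  (lowerSup_le_left hv ⟨x, le_rfl, le_rfl⟩).antisymm (le_lowerSup le_rfl le_rfl)

theorem le_of_lowerSup_eq_left (hv : StrictMono v) (hlb : ∃ w, w ≤ x ∧ w ≤ y)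
    (h : lowerSup v x y = v x) : x ≤ y := by
  obtain ⟨w, hwx, hwy, hvw⟩ := exists_lowerSup_eq (v := v) hlb
  have hwx' : w = x := hwx.eq_of_not_lt fun hlt => (hv hlt).ne (hvw.trans h)
  exact hwx' ▸ hwy

theorem lowerSup_mono {a b x z : P} (hlb : ∃ w, w ≤ a ∧ w ≤ b) (hax : a ≤ x) (hbz : b ≤ z) :
    lowerSup v a b ≤ lowerSup v x z := by
  obtain ⟨w, hwa, hwb, hvw⟩ := exists_lowerSup_eq (v := v) hlb
  exact hvw ▸ le_lowerSup (hwa.trans hax) (hwb.trans hbz)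

theorem lowerSup_add_lowerSup_le (hlb : ∀ x y : P, ∃ w, w ≤ x ∧ w ≤ y)
    (hval : ∀ x y z : P, x ≤ z → y ≤ z → v x + v y ≤ lowerSup v x y + v z) (x y z : P) :
    lowerSup v x y + lowerSup v y z ≤ lowerSup v x z + v y := by
  obtain ⟨a, hax, hay, hva⟩ := exists_lowerSup_eq (v := v) (hlb x y)
  obtain ⟨b, hby, hbz, hvb⟩ := exists_lowerSup_eq (v := v) (hlb y z)
  calc lowerSup v x y + lowerSup v y z = v a + v b := by rw [hva, hvb]
    _ ≤ lowerSup v a b + v y := hval a b y hay hby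
    _ ≤ lowerSup v x z + v y := by gcongr; exact lowerSup_mono (hlb a b) hax hbz

end LowerSup

/-- If `v` is a strictly isotone lower valuation on a finite poset `P`,
then `d_v(x,y) = v x + v y - 2 * v⁻(x,y)` is a metric on `P`, where
`v⁻(x,y) = sup {v w : w ≤ x ∧ w ≤ y}`. -/
theorem stmt_0 {P : Type*} [Fintype P] [PartialOrder P] (v : P → ℝ)
    (hstrict : ∀ x y : P, x < y → v x < v y)
    (hlb : ∀ x y : P, ∃ w : P, w ≤ x ∧ w ≤ y)
    (hval : ∀ x y z : P, x ≤ z → y ≤ z →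
      v x + v y ≤ sSup (v '' {w | w ≤ x ∧ w ≤ y}) + v z)
    (d : P → P → ℝ)
    (hd : ∀ x y : P, d x y = v x + v y - 2 * sSup (v '' {w | w ≤ x ∧ w ≤ y})) :
    (∀ x y : P, 0 ≤ d x y) ∧
    (∀ x y : P, d x y = d y x) ∧
    (∀ x y z : P, d x z ≤ d x y + d y z) ∧
    (∀ x y : P, d x y = 0 ↔ x = y) := by
  have hv : StrictMono v := fun x y => hstrict x y
  have hd : ∀ x y, d x y = v x + v y - 2 * lowerSup v x y := hd
  have hle : ∀ x y, lowerSup v x y ≤ v x ∧ lowerSup v x y ≤ v y := fun x y =>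
    ⟨lowerSup_le_left hv.monotone (hlb x y),
      lowerSup_comm v x y ▸ lowerSup_le_left hv.monotone (hlb y x)⟩
  refine ⟨fun x y => ?_, fun x y => ?_, fun x y z => ?_, fun x y => ⟨fun h => ?_, ?_⟩⟩
  · linarith [hd x y, hle x y]
  · rw [hd, hd, lowerSup_comm]; ring
  · linarith [hd x z, hd x y, hd y z, lowerSup_add_lowerSup_le (hlb := hlb) hval x y z]
  · have hx : lowerSup v x y = v x := by linarith [hd x y, hle x y]
    have hy : lowerSup v y x = v y := by linarith [hd x y, hle x y, lowerSup_comm v x y]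
    exact (le_of_lowerSup_eq_left hv (hlb x y) hx).antisymm
      (le_of_lowerSup_eq_left hv (hlb y x) hy)
  · rintro rfl
    rw [hd, lowerSup_self hv.monotone]; ring
end

section
/- Let P be a finite partially ordered set and let v : P → ℝ be a strictly antitone lower valuation. Then the function d_v(x,y) = v(x) + v(y) − 2·v⁺(x,y) is a metric on P: it is nonnegative, symmetric, satisfies the triangle inequality, and d_v(x,y) = 0 if and only if x = y. -/
/-!
Every `v⁺(x, y)` is attained at some common upper bound. Nonnegativity and `d x x = 0` follow
from antitonicity, and `d x y = 0` forces `v x = v w = v y` at the attaining bound `w`, hence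
`x = w = y` by strictness. For the triangle inequality, let `a`, `b` attain `v⁺(x, y)`, `v⁺(y, z)`
and `c` attain `v⁺(a, b)`: the lower valuation inequality at `y ≤ a, b` gives
`v a + v b ≤ v y + v c`, and `c` is a common upper bound of `x` and `z`.
-/

section UpperSup

variable {P : Type*} [PartialOrder P]

/-- The paper's `v⁺(x, y)`. -/
noncomputable def upperSup (v : P → ℝ) (x y : P) : ℝ :=
  sSup (v '' {w | x ≤ w ∧ y ≤ w})

theorem upperSup_comm (v : P → ℝ) (x y : P) : upperSup v x y = upperSup v y x := by
  simp only [upperSup, and_comm]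

theorem StrictAnti.eq_of_le_of_apply_eq {v : P → ℝ} (hv : StrictAnti v) {x w : P}
    (hxw : x ≤ w) (h : v x = v w) : x = w := by
  by_contra hne
  exact (hv (hxw.lt_of_ne hne)).ne' h

variable [Finite P] {v : P → ℝ}

theorem le_upperSup {x y w : P} (hx : x ≤ w) (hy : y ≤ w) : v w ≤ upperSup v x y :=
  le_csSup ((Set.toFinite _).image v).bddAbove ⟨w, ⟨hx, hy⟩, rfl⟩

theorem exists_upperSup_eq {x y : P} (hub : ∃ w, x ≤ w ∧ y ≤ w) :
    ∃ w, x ≤ w ∧ y ≤ w ∧ upperSup v x y = v w := by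
  obtain ⟨w, hxw, hyw⟩ := hub
  have hne : (v '' {w | x ≤ w ∧ y ≤ w}).Nonempty := ⟨v w, w, ⟨hxw, hyw⟩, rfl⟩
  obtain ⟨u, ⟨hxu, hyu⟩, hu⟩ := hne.csSup_mem ((Set.toFinite _).image v)
  exact ⟨u, hxu, hyu, hu.symm⟩

theorem upperSup_self (hv : Antitone v) (x : P) : upperSup v x x = v x := by
  obtain ⟨w, hxw, -, hw⟩ := exists_upperSup_eq (v := v) ⟨x, le_rfl, le_rfl⟩
  exact le_antisymm (hw ▸ hv hxw) (le_upperSup le_rfl le_rfl)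

theorem two_mul_upperSup_le (hv : Antitone v) {x y : P} (hub : ∃ w, x ≤ w ∧ y ≤ w) :
    2 * upperSup v x y ≤ v x + v y := by
  obtain ⟨w, hxw, hyw, hw⟩ := exists_upperSup_eq (v := v) hub
  linarith [hv hxw, hv hyw]

theorem eq_of_two_mul_upperSup_eq (hv : StrictAnti v) {x y : P} (hub : ∃ w, x ≤ w ∧ y ≤ w)
    (h : v x + v y = 2 * upperSup v x y) : x = y := by
  obtain ⟨w, hxw, hyw, hw⟩ := exists_upperSup_eq (v := v) hub
  have hvx := hv.antitone hxw
  have hvy := hv.antitone hyw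
  rw [hv.eq_of_le_of_apply_eq hxw (by linarith), hv.eq_of_le_of_apply_eq hyw (by linarith)]

theorem upperSup_add_upperSup_le
    (hub : ∀ x y : P, ∃ w, x ≤ w ∧ y ≤ w)
    (hval : ∀ x y z : P, z ≤ x → z ≤ y → v x + v y ≤ v z + upperSup v x y) (x y z : P) :
    upperSup v x y + upperSup v y z ≤ v y + upperSup v x z := by
  obtain ⟨a, hxa, hya, ha⟩ := exists_upperSup_eq (v := v) (hub x y)
  obtain ⟨b, hyb, hzb, hb⟩ := exists_upperSup_eq (v := v) (hub y z)
  obtain ⟨c, hac, hbc, hc⟩ := exists_upperSup_eq (v := v) (hub a b)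
  have hlower := hval a b y hya hyb
  have hc_le : v c ≤ upperSup v x z := le_upperSup (hxa.trans hac) (hzb.trans hbc)
  linarith

end UpperSup

/-- If `v` is a strictly antitone lower valuation on a finite poset `P`,
then `d_v(x,y) = v x + v y - 2 * v⁺(x,y)` is a metric on `P`, where
`v⁺(x,y) = sup {v w : x ≤ w ∧ y ≤ w}`. -/
theorem stmt_1 {P : Type*} [Fintype P] [PartialOrder P] (v : P → ℝ)
    (hstrict : ∀ x y : P, x < y → v y < v x)
    (hub : ∀ x y : P, ∃ w : P, x ≤ w ∧ y ≤ w)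
    (hval : ∀ x y z : P, z ≤ x → z ≤ y →
      v x + v y ≤ v z + sSup (v '' {w | x ≤ w ∧ y ≤ w}))
    (d : P → P → ℝ)
    (hd : ∀ x y : P, d x y = v x + v y - 2 * sSup (v '' {w | x ≤ w ∧ y ≤ w})) :
    (∀ x y : P, 0 ≤ d x y) ∧
    (∀ x y : P, d x y = d y x) ∧
    (∀ x y z : P, d x z ≤ d x y + d y z) ∧
    (∀ x y : P, d x y = 0 ↔ x = y) := by
  have hv : StrictAnti v := hstrict
  change ∀ x y, d x y = v x + v y - 2 * upperSup v x y at hd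
  refine ⟨fun x y => ?_, fun x y => ?_, fun x y z => ?_, fun x y => ⟨fun h => ?_, ?_⟩⟩
  · linarith [hd x y, two_mul_upperSup_le hv.antitone (hub x y)]
  · rw [hd, hd, upperSup_comm]; ring
  · linarith [hd x y, hd y z, hd x z, upperSup_add_upperSup_le hub hval x y z]
  · exact eq_of_two_mul_upperSup_eq hv (hub x y) (by linarith [hd x y])
  · rintro rfl
    rw [hd, upperSup_self hv.antitone]; ring
end

section
/- Let P be a finite partially ordered set and let v : P → ℝ be a strictly isotone upper valuation. Then the function d_v(x,y) = 2·v⁺(x,y) − v(x) − v(y) is a metric on P: it is nonnegative, symmetric, satisfies the triangle inequality, and d_v(x,y) = 0 if and only if x = y. -/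
/-!
Since `P` is finite, the infimum `v⁺(x, y)` is attained at some common upper bound of `x` and `y`.
Nonnegativity and the separation property then follow from strict isotonicity. For the triangle
inequality, pick upper bounds `a` of `x, y` and `b` of `y, z` attaining `v⁺`; every common upper
bound of `a, b` bounds `x, z`, so `v⁺(x, z) ≤ v⁺(a, b) ≤ v a + v b - v y` by the upper valuation
inequality applied below `y`, which rearranges to `d(x, z) ≤ d(x, y) + d(y, z)`.
-/

namespace UpperValuation

variable {P : Type*} [PartialOrder P] (v : P → ℝ)

/-- The paper's `v⁺(x, y)`. -/
noncomputable def upperValue (x y : P) : ℝ := sInf (v '' {w | x ≤ w ∧ y ≤ w})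

variable {v}

theorem upperValue_comm (x y : P) : upperValue v x y = upperValue v y x := by
  simp only [upperValue, and_comm]

theorem upperValue_le [Finite P] {x y w : P} (hxw : x ≤ w) (hyw : y ≤ w) :
    upperValue v x y ≤ v w :=
  csInf_le (Set.toFinite _).bddBelow ⟨w, ⟨hxw, hyw⟩, rfl⟩

theorem exists_upperValue_eq [Finite P] {x y : P} (hxy : ∃ w, x ≤ w ∧ y ≤ w) :
    ∃ w, x ≤ w ∧ y ≤ w ∧ v w = upperValue v x y := by
  have hne : (v '' {w | x ≤ w ∧ y ≤ w}).Nonempty := Set.Nonempty.image v hxy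
  obtain ⟨w, ⟨hxw, hyw⟩, hw⟩ := hne.csInf_mem (Set.toFinite _)
  exact ⟨w, hxw, hyw, hw⟩

theorem le_upperValue_left (hv : Monotone v) {x y : P} (hxy : ∃ w, x ≤ w ∧ y ≤ w) :
    v x ≤ upperValue v x y := by
  refine le_csInf (Set.Nonempty.image v hxy) ?_
  rintro _ ⟨u, ⟨hxu, -⟩, rfl⟩
  exact hv hxu

theorem le_upperValue_right (hv : Monotone v) {x y : P} (hxy : ∃ w, x ≤ w ∧ y ≤ w) :
    v y ≤ upperValue v x y :=
  upperValue_comm x y ▸ le_upperValue_left hv (hxy.imp fun _ ⟨hx, hy⟩ => ⟨hy, hx⟩)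

theorem upperValue_self [Finite P] (hv : Monotone v) (x : P) : upperValue v x x = v x :=
  (upperValue_le le_rfl le_rfl).antisymm (le_upperValue_left hv ⟨x, le_rfl, le_rfl⟩)

theorem upperValue_mono [Finite P] {x y a b : P} (hxa : x ≤ a) (hyb : y ≤ b)
    (hab : ∃ w, a ≤ w ∧ b ≤ w) : upperValue v x y ≤ upperValue v a b := by
  obtain ⟨w, haw, hbw, hw⟩ := exists_upperValue_eq (v := v) hab
  exact hw ▸ upperValue_le (hxa.trans haw) (hyb.trans hbw)

theorem eq_of_upperValue_eq [Finite P] (hv : StrictMono v) {x y : P}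
    (hxy : ∃ w, x ≤ w ∧ y ≤ w) (hx : upperValue v x y = v x) (hy : upperValue v x y = v y) :
    x = y := by
  obtain ⟨w, hxw, hyw, hw⟩ := exists_upperValue_eq (v := v) hxy
  have hxw' : x = w := hxw.eq_of_not_lt fun h => (hv h).ne (hx ▸ hw).symm
  have hyw' : y = w := hyw.eq_of_not_lt fun h => (hv h).ne (hy ▸ hw).symm
  rw [hxw', hyw']

variable (v) in
noncomputable def upperDist (x y : P) : ℝ := 2 * upperValue v x y - v x - v y

theorem upperDist_nonneg (hv : Monotone v) {x y : P} (hxy : ∃ w, x ≤ w ∧ y ≤ w) :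
    0 ≤ upperDist v x y := by
  have := le_upperValue_left hv hxy
  have := le_upperValue_right hv hxy
  unfold upperDist
  linarith

theorem upperDist_comm (x y : P) : upperDist v x y = upperDist v y x := by
  rw [upperDist, upperDist, upperValue_comm]
  ring

theorem upperDist_self [Finite P] (hv : Monotone v) (x : P) : upperDist v x x = 0 := by
  rw [upperDist, upperValue_self hv]
  ring

theorem upperDist_triangle [Finite P] (hub : ∀ x y : P, ∃ w, x ≤ w ∧ y ≤ w)
    (hval : ∀ x y z : P, z ≤ x → z ≤ y → upperValue v x y + v z ≤ v x + v y) (x y z : P) :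
    upperDist v x z ≤ upperDist v x y + upperDist v y z := by
  obtain ⟨a, hxa, hya, ha⟩ := exists_upperValue_eq (v := v) (hub x y)
  obtain ⟨b, hyb, hzb, hb⟩ := exists_upperValue_eq (v := v) (hub y z)
  have hxz : upperValue v x z ≤ upperValue v a b := upperValue_mono hxa hzb (hub a b)
  have hab := hval a b y hya hyb
  unfold upperDist
  linarith

theorem upperDist_eq_zero_iff [Finite P] (hv : StrictMono v) (hub : ∀ x y : P, ∃ w, x ≤ w ∧ y ≤ w)
    {x y : P} : upperDist v x y = 0 ↔ x = y := by
  refine ⟨fun h => ?_, fun h => h ▸ upperDist_self hv.monotone x⟩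
  have hx := le_upperValue_left hv.monotone (hub x y)
  have hy := le_upperValue_right hv.monotone (hub x y)
  unfold upperDist at h
  exact eq_of_upperValue_eq hv (hub x y) (by linarith) (by linarith)

end UpperValuation

/-- If `v` is a strictly isotone upper valuation on a finite poset `P`,
then `d_v(x,y) = 2 * v⁺(x,y) - v x - v y` is a metric on `P`, where
`v⁺(x,y) = inf {v w : x ≤ w ∧ y ≤ w}`. -/
theorem stmt_2 {P : Type*} [Fintype P] [PartialOrder P] (v : P → ℝ)
    (hstrict : ∀ x y : P, x < y → v x < v y)
    (hub : ∀ x y : P, ∃ w : P, x ≤ w ∧ y ≤ w)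
    (hval : ∀ x y z : P, z ≤ x → z ≤ y →
      sInf (v '' {w | x ≤ w ∧ y ≤ w}) + v z ≤ v x + v y)
    (d : P → P → ℝ)
    (hd : ∀ x y : P, d x y = 2 * sInf (v '' {w | x ≤ w ∧ y ≤ w}) - v x - v y) :
    (∀ x y : P, 0 ≤ d x y) ∧
    (∀ x y : P, d x y = d y x) ∧
    (∀ x y z : P, d x z ≤ d x y + d y z) ∧
    (∀ x y : P, d x y = 0 ↔ x = y) := by
  obtain rfl : d = UpperValuation.upperDist v := funext₂ hd
  have hv : StrictMono v := fun x y => hstrict x y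
  exact ⟨fun x y => UpperValuation.upperDist_nonneg hv.monotone (hub x y),
    UpperValuation.upperDist_comm, UpperValuation.upperDist_triangle hub hval,
    fun x y => UpperValuation.upperDist_eq_zero_iff hv hub⟩
end

section
/- Let P be a finite partially ordered set and let v : P → ℝ be a strictly antitone upper valuation. Then the function d_v(x,y) = 2·v⁻(x,y) − v(x) − v(y) is a metric on P: it is nonnegative, symmetric, satisfies the triangle inequality, and d_v(x,y) = 0 if and only if x = y. -/
/-!
On a finite codirected poset the infimum `v⁻(x, y)` (`lowerInf v x y`) is attained at a common
lower bound of `x` and `y`. Since `v` is antitone, `v⁻(x, y) ≥ max (v x) (v y)`, which gives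
nonnegativity, and strictness makes `v⁻(x, y) = v x` equivalent to `x ≤ y`, which gives
`d_v(x, y) = 0 ↔ x = y`. For the triangle inequality pick minimisers `a ≤ x, y` and `b ≤ y, z`:
every common lower bound of `a` and `b` lies below `x` and `z`, so
`v⁻(x, z) ≤ v⁻(a, b) ≤ v a + v b - v y` by the upper valuation inequality at `a, b ≤ y`.
-/

namespace UpperValuation

variable {P : Type*} [PartialOrder P] (v : P → ℝ)

noncomputable def lowerInf (x y : P) : ℝ := sInf (v '' {w | w ≤ x ∧ w ≤ y})

noncomputable def valuationDist (x y : P) : ℝ := 2 * lowerInf v x y - v x - v y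

variable {v}

theorem lowerInf_comm (x y : P) : lowerInf v x y = lowerInf v y x := by
  simp only [lowerInf, and_comm]

theorem valuationDist_comm (x y : P) : valuationDist v x y = valuationDist v y x := by
  rw [valuationDist, valuationDist, lowerInf_comm]
  ring

section Finite

variable [Finite P]

theorem lowerInf_le {x y w : P} (hx : w ≤ x) (hy : w ≤ y) : lowerInf v x y ≤ v w :=
  csInf_le (Set.toFinite _).bddBelow ⟨w, ⟨hx, hy⟩, rfl⟩

variable [IsCodirectedOrder P]

theorem exists_lowerInf_eq (x y : P) : ∃ w, w ≤ x ∧ w ≤ y ∧ v w = lowerInf v x y := by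
  obtain ⟨w, hx, hy⟩ := exists_le_le x y
  have hne : (v '' {w | w ≤ x ∧ w ≤ y}).Nonempty := ⟨v w, w, ⟨hx, hy⟩, rfl⟩
  obtain ⟨w, ⟨hx, hy⟩, hw⟩ := hne.csInf_mem (Set.toFinite _)
  exact ⟨w, hx, hy, hw⟩

theorem lowerInf_antitone {x y x' y' : P} (hx : x' ≤ x) (hy : y' ≤ y) :
    lowerInf v x y ≤ lowerInf v x' y' := by
  obtain ⟨w, hwx, hwy, hw⟩ := exists_lowerInf_eq (v := v) x' y'
  exact hw ▸ lowerInf_le (hwx.trans hx) (hwy.trans hy)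

theorem le_lowerInf_left (hv : Antitone v) (x y : P) : v x ≤ lowerInf v x y := by
  obtain ⟨w, hwx, -, hw⟩ := exists_lowerInf_eq (v := v) x y
  exact hw ▸ hv hwx

theorem le_lowerInf_right (hv : Antitone v) (x y : P) : v y ≤ lowerInf v x y :=
  lowerInf_comm (v := v) y x ▸ le_lowerInf_left hv y x

theorem lowerInf_eq_left_iff (hv : StrictAnti v) {x y : P} : lowerInf v x y = v x ↔ x ≤ y := by
  refine ⟨fun h => ?_, fun h => (lowerInf_le le_rfl h).antisymm (le_lowerInf_left hv.antitone x y)⟩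
  obtain ⟨w, hwx, hwy, hw⟩ := exists_lowerInf_eq (v := v) x y
  obtain rfl | hlt := hwx.eq_or_lt
  · exact hwy
  · exact absurd (hw.trans h) (hv hlt).ne'

theorem valuationDist_nonneg (hv : Antitone v) (x y : P) : 0 ≤ valuationDist v x y := by
  have hx := le_lowerInf_left hv x y
  have hy := le_lowerInf_right hv x y
  unfold valuationDist
  linarith

theorem valuationDist_eq_zero_iff (hv : StrictAnti v) {x y : P} :
    valuationDist v x y = 0 ↔ x = y := by
  have hx := le_lowerInf_left hv.antitone x y
  have hy := le_lowerInf_right hv.antitone x y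
  constructor
  · intro h
    unfold valuationDist at h
    apply le_antisymm
    · rw [← lowerInf_eq_left_iff hv]
      linarith
    · rw [← lowerInf_eq_left_iff hv, lowerInf_comm]
      linarith
  · rintro rfl
    rw [valuationDist, (lowerInf_eq_left_iff hv).2 le_rfl]
    ring

theorem valuationDist_triangle
    (hval : ∀ x y z : P, x ≤ z → y ≤ z → lowerInf v x y + v z ≤ v x + v y) (x y z : P) :
    valuationDist v x z ≤ valuationDist v x y + valuationDist v y z := by
  obtain ⟨a, hax, hay, ha⟩ := exists_lowerInf_eq (v := v) x y
  obtain ⟨b, hby, hbz, hb⟩ := exists_lowerInf_eq (v := v) y z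
  have hab := lowerInf_antitone (v := v) hax hbz
  have := hval a b y hay hby
  unfold valuationDist
  linarith

end Finite

end UpperValuation

open UpperValuation in
/-- If `v` is a strictly antitone upper valuation on a finite poset `P`,
then `d_v(x,y) = 2 * v⁻(x,y) - v x - v y` is a metric on `P`, where
`v⁻(x,y) = inf {v w : w ≤ x ∧ w ≤ y}`. -/
theorem stmt_3 {P : Type*} [Fintype P] [PartialOrder P] (v : P → ℝ)
    (hstrict : ∀ x y : P, x < y → v y < v x)
    (hlb : ∀ x y : P, ∃ w : P, w ≤ x ∧ w ≤ y)
    (hval : ∀ x y z : P, x ≤ z → y ≤ z →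
      sInf (v '' {w | w ≤ x ∧ w ≤ y}) + v z ≤ v x + v y)
    (d : P → P → ℝ)
    (hd : ∀ x y : P, d x y = 2 * sInf (v '' {w | w ≤ x ∧ w ≤ y}) - v x - v y) :
    (∀ x y : P, 0 ≤ d x y) ∧
    (∀ x y : P, d x y = d y x) ∧
    (∀ x y z : P, d x z ≤ d x y + d y z) ∧
    (∀ x y : P, d x y = 0 ↔ x = y) := by
  have : IsCodirectedOrder P := ⟨hlb⟩
  have hv : StrictAnti v := fun x y h => hstrict x y h
  obtain rfl : d = valuationDist v := funext₂ hd
  exact ⟨valuationDist_nonneg hv.antitone, valuationDist_comm, valuationDist_triangle hval,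
    fun _ _ => valuationDist_eq_zero_iff hv⟩
end

section
/- Let P be a finite partially ordered set and let v : P → ℝ be an isotone lower valuation. Then for all x, y, z ∈ P one has v⁻(x,y) + v⁻(y,z) ≤ v⁻(x,z) + v(y). -/
/-!
Choose `a ≤ x, y` and `b ≤ y, z` at which `v⁻(x,y)` and `v⁻(y,z)` are attained. Applying the
lower valuation inequality to `a, b ≤ y` gives `v⁻(x,y) + v⁻(y,z) ≤ v⁻(a,b) + v y`, and
`v⁻(a,b) ≤ v⁻(x,z)` because every common lower bound of `a` and `b` is one of `x` and `z`.
-/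

section LowerSup

variable {P : Type*} [Finite P] [Preorder P] (v : P → ℝ)

theorem exists_lowerBound_eq_sSup_image {x y : P} (h : {w | w ≤ x ∧ w ≤ y}.Nonempty) :
    ∃ a, (a ≤ x ∧ a ≤ y) ∧ v a = sSup (v '' {w | w ≤ x ∧ w ≤ y}) :=
  (h.image v).csSup_mem (Set.toFinite _)

theorem sSup_image_lowerBounds_mono {a b x z : P} (hax : a ≤ x) (hbz : b ≤ z)
    (h : {w | w ≤ a ∧ w ≤ b}.Nonempty) :
    sSup (v '' {w | w ≤ a ∧ w ≤ b}) ≤ sSup (v '' {w | w ≤ x ∧ w ≤ z}) :=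
  csSup_le_csSup (Set.toFinite _).bddAbove (h.image v) <|
    Set.image_mono fun _ ⟨hwa, hwb⟩ => ⟨hwa.trans hax, hwb.trans hbz⟩

end LowerSup

theorem stmt_4_general {P : Type*} [Fintype P] [PartialOrder P] (v : P → ℝ)
    (hlb : ∀ x y : P, ∃ w : P, w ≤ x ∧ w ≤ y)
    (hval : ∀ x y z : P, x ≤ z → y ≤ z →
      v x + v y ≤ sSup (v '' {w | w ≤ x ∧ w ≤ y}) + v z) :
    ∀ x y z : P,
      sSup (v '' {w | w ≤ x ∧ w ≤ y}) + sSup (v '' {w | w ≤ y ∧ w ≤ z}) ≤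
        sSup (v '' {w | w ≤ x ∧ w ≤ z}) + v y := by
  intro x y z
  obtain ⟨a, ⟨hax, hay⟩, hva⟩ := exists_lowerBound_eq_sSup_image v (hlb x y)
  obtain ⟨b, ⟨hby, hbz⟩, hvb⟩ := exists_lowerBound_eq_sSup_image v (hlb y z)
  have hab := hval a b y hay hby
  have hmono := sSup_image_lowerBounds_mono v hax hbz (hlb a b)
  rw [hva, hvb] at hab
  linarith

/-- If `v` is an isotone lower valuation on a finite poset `P`, then
`v⁻(x,y) + v⁻(y,z) ≤ v⁻(x,z) + v y` for all `x y z`, where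
`v⁻(x,y) = sup {v w : w ≤ x ∧ w ≤ y}`. -/
theorem stmt_4 {P : Type*} [Fintype P] [PartialOrder P] (v : P → ℝ)
    (hmono : Monotone v)
    (hlb : ∀ x y : P, ∃ w : P, w ≤ x ∧ w ≤ y)
    (hval : ∀ x y z : P, x ≤ z → y ≤ z →
      v x + v y ≤ sSup (v '' {w | w ≤ x ∧ w ≤ y}) + v z) :
    ∀ x y z : P,
      sSup (v '' {w | w ≤ x ∧ w ≤ y}) + sSup (v '' {w | w ≤ y ∧ w ≤ z}) ≤
        sSup (v '' {w | w ≤ x ∧ w ≤ z}) + v y :=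
  stmt_4_general v hlb hval
end

section
/- Let L be a finite join-semilattice with a least element 0, and let v : L → ℝ be strictly isotone such that for all x, y ∈ L: v(x) + v(y) = v⁻(x,y) + v(x ⊔ y), where v⁻(x,y) = sup{v(z) : z ≤ x and z ≤ y} (the set of common lower bounds is nonempty since 0 is one). Then every pair of elements x, y ∈ L has a greatest lower bound x ⊓ y, one has v(x) + v(y) = v(x ⊓ y) + v(x ⊔ y) for all x, y, and the resulting lattice is modular: for all x, y, z ∈ L with x ≤ z, x ⊔ (y ⊓ z) = (x ⊔ y) ⊓ z. -/
/-!
A finite join-semilattice with `⊥` has all binary meets: the common lower bounds of `x` and `y`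
form a finite, nonempty, `⊔`-closed set, so their join is the greatest of them. Since `v` is
monotone, `v⁻(x, y)` is then `v (x ⊓ y)`. For modularity, let `x ≤ z`; then
`x ⊔ (y ⊓ z) ≤ (x ⊔ y) ⊓ z`, and the valuation identity, applied to the pairs `(x, y ⊓ z)`,
`(y, z)`, `(x ⊔ y, z)`, `(x, y)` together with `x ⊓ (y ⊓ z) = x ⊓ y` and `x ⊔ y ⊔ z = y ⊔ z`,
shows that both sides have the same value. A strictly isotone `v` cannot take the same value at
two comparable distinct elements.
-/

open Set

section Preorder

variable {α : Type*} [Preorder α]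

theorem lowerBounds_pair_of_isGLB {x y z a : α} (hxz : x ≤ z) (ha : IsGLB {y, z} a) :
    lowerBounds {x, a} = lowerBounds {x, y} := by
  ext w
  simp only [lowerBounds_insert, lowerBounds_singleton, mem_inter_iff, mem_Iic,
    le_isGLB_iff ha]
  exact ⟨fun ⟨hwx, hwy, _⟩ => ⟨hwx, hwy⟩,
    fun ⟨hwx, hwy⟩ => ⟨hwx, hwy, hwx.trans hxz⟩⟩

theorem csSup_image_lowerBounds {β : Type*} [ConditionallyCompleteLattice β] {f : α → β}
    (hf : Monotone f) {s : Set α} {m : α} (hm : IsGLB s m) :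
    sSup (f '' lowerBounds s) = f m :=
  (hf.map_isGreatest hm).csSup_eq

end Preorder

section SemilatticeSup

variable {L : Type*} [SemilatticeSup L]

theorem exists_isGLB_of_finite [Finite L] {s : Set L} (hs : (lowerBounds s).Nonempty) :
    ∃ m, IsGLB s m := by
  classical
  have hne : (lowerBounds s).toFinite.toFinset.Nonempty := by simpa using hs
  refine ⟨(lowerBounds s).toFinite.toFinset.sup' hne id, ?_, fun w hw => ?_⟩
  · intro a ha
    refine Finset.sup'_le _ _ fun b hb => ?_
    exact (Set.Finite.mem_toFinset _).1 hb ha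
  · exact Finset.le_sup' id ((Set.Finite.mem_toFinset _).2 hw)

theorem exists_isGLB_pair [Finite L] [OrderBot L] (x y : L) : ∃ m, IsGLB {x, y} m :=
  exists_isGLB_of_finite ⟨⊥, fun _ _ => bot_le⟩

theorem sup_isGLB_eq_of_valuation {v : L → ℝ} (hv : StrictMono v)
    (hval : ∀ x y m, IsGLB {x, y} m → v x + v y = v m + v (x ⊔ y))
    (hglb : ∀ x y : L, ∃ m, IsGLB {x, y} m) {x y z a b : L} (hxz : x ≤ z)
    (ha : IsGLB {y, z} a) (hb : IsGLB {x ⊔ y, z} b) : x ⊔ a = b := by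
  have hay : a ≤ y := ha.1 (by simp)
  have haz : a ≤ z := ha.1 (by simp)
  have hle : x ⊔ a ≤ b := hb.2 <| by
    rintro w (rfl | rfl)
    exacts [sup_le le_sup_left (hay.trans le_sup_right), sup_le hxz haz]
  obtain ⟨m, hm⟩ := hglb x y
  have hm' : IsGLB {x, a} m := by
    rwa [IsGLB, lowerBounds_pair_of_isGLB hxz ha]
  have hjoin : x ⊔ y ⊔ z = y ⊔ z := by
    rw [sup_right_comm, sup_eq_right.mpr hxz, sup_comm]
  have h₁ := hval x y m hm
  have h₂ := hval x a m hm'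
  have h₃ := hval y z a ha
  have h₄ := hval (x ⊔ y) z b hb
  rw [hjoin] at h₄
  have hveq : v (x ⊔ a) = v b := by linarith
  exact hle.eq_of_not_lt fun hlt => (hv hlt).ne hveq

end SemilatticeSup

/-- Let `L` be a finite join-semilattice with least element `0` and let
`v : L → ℝ` be strictly isotone with `v x + v y = v⁻(x,y) + v (x ⊔ y)` for all `x, y`,
where `v⁻(x,y) = sup {v z : z ≤ x ∧ z ≤ y}`. Then every pair has a greatest lower
bound `x ⊓ y`, `v x + v y = v (x ⊓ y) + v (x ⊔ y)`, and the resulting lattice is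
modular: `x ≤ z → x ⊔ (y ⊓ z) = (x ⊔ y) ⊓ z`. -/
theorem stmt_6 {L : Type*} [Fintype L] [SemilatticeSup L] [OrderBot L] (v : L → ℝ)
    (hstrict : StrictMono v)
    (hval : ∀ x y : L, v x + v y = sSup (v '' {z | z ≤ x ∧ z ≤ y}) + v (x ⊔ y)) :
    (∀ x y : L, ∃ m : L, IsGLB {x, y} m ∧ v x + v y = v m + v (x ⊔ y)) ∧
    (∀ x y z a b : L, x ≤ z → IsGLB {y, z} a → IsGLB {x ⊔ y, z} b →
      x ⊔ a = b) := by
  have hmeet : ∀ x y m, IsGLB {x, y} m → v x + v y = v m + v (x ⊔ y) := by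
    intro x y m hm
    have hlb : {z | z ≤ x ∧ z ≤ y} = lowerBounds {x, y} := by
      simp [lowerBounds_insert, Set.ext_iff]
    rw [hval x y, hlb, csSup_image_lowerBounds hstrict.monotone hm]
  refine ⟨fun x y => ?_, fun x y z a b =>
    sup_isGLB_eq_of_valuation hstrict hmeet exists_isGLB_pair⟩
  obtain ⟨m, hm⟩ := exists_isGLB_pair x y
  exact ⟨m, hm, hmeet x y m hm⟩
end

section
/- Let P be a finite bounded partially ordered set with Δ_∧(P) ≤ 1. Then v(x) = |↓x| is an isotone lower valuation on P: for all x, y, z ∈ P with x ≤ z and y ≤ z, |↓x| + |↓y| ≤ max{|↓w| : w ≤ x and w ≤ y} + |↓z|. -/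
/-! Since `↓x ∪ ↓y ⊆ ↓z`, inclusion–exclusion gives `|↓x| + |↓y| ≤ |↓z| + |↓x ∩ ↓y|` as soon as
`z ∉ ↓x ∪ ↓y`, and then even with one to spare. The hypothesis `Δ_∧(P) ≤ 1` says that `|↓x ∩ ↓y|`
exceeds the largest `|↓w|`, `w ≤ x, y`, by at most one, which that spare unit absorbs. If instead
`z ≤ x`, then `x = z` and `y ≤ x`, so `y` itself is a common lower bound and the inequality is
immediate. -/

open Set

/-- Nonnegativity stands in for nonemptiness of `s`, since `sSup ∅ = 0` in `ℝ`. -/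
lemma Real.sSup_le_sSup_of_nonneg {s t : Set ℝ} (hst : s ⊆ t) (ht : BddAbove t)
    (ht₀ : ∀ a ∈ t, 0 ≤ a) : sSup s ≤ sSup t :=
  Real.sSup_le (fun _ ha => le_csSup ht (hst ha)) (Real.sSup_nonneg ht₀)

section DownSets

variable {α : Type*} [Finite α]

lemma monotone_ncard_Iic [Preorder α] : Monotone fun x : α => ((Iic x).ncard : ℝ) :=
  fun _ _ hab => Nat.cast_le.2 <| ncard_le_ncard (Iic_subset_Iic.2 hab) (toFinite _)

lemma ncard_Iic_add_ncard_Iic_lt [Preorder α] {x y z : α} (hxz : x ≤ z) (hyz : y ≤ z)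
    (hzx : ¬z ≤ x) (hzy : ¬z ≤ y) :
    (Iic x).ncard + (Iic y).ncard < (Iic z).ncard + (Iic x ∩ Iic y).ncard := by
  have hunion : Iic x ∪ Iic y ⊂ Iic z := by
    refine ssubset_of_subset_not_subset (union_subset (Iic_subset_Iic.2 hxz)
      (Iic_subset_Iic.2 hyz)) fun h => ?_
    rcases h self_mem_Iic with h | h
    exacts [hzx h, hzy h]
  rw [← ncard_union_add_ncard_inter _ _ (toFinite _) (toFinite _)]
  exact Nat.add_lt_add_right (ncard_lt_ncard hunion (toFinite _)) _

lemma ncard_Iic_add_ncard_Iic_le [PartialOrder α] {x y z : α} {c : ℝ} (hxz : x ≤ z)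
    (hyz : y ≤ z) (hc : ∀ w, w ≤ x → w ≤ y → ((Iic w).ncard : ℝ) ≤ c)
    (hinter : ((Iic x ∩ Iic y).ncard : ℝ) ≤ c + 1) :
    ((Iic x).ncard : ℝ) + (Iic y).ncard ≤ c + (Iic z).ncard := by
  by_cases hzx : z ≤ x
  · have hyc := hc y (hyz.trans hzx) le_rfl
    rw [le_antisymm hxz hzx]
    linarith
  by_cases hzy : z ≤ y
  · have hxc := hc x le_rfl (hxz.trans hzy)
    rw [le_antisymm hyz hzy]
    linarith
  have hlt : ((Iic x).ncard + (Iic y).ncard + 1 : ℝ) ≤ (Iic z).ncard + (Iic x ∩ Iic y).ncard := by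
    exact_mod_cast ncard_Iic_add_ncard_Iic_lt hxz hyz hzx hzy
  linarith

end DownSets

theorem stmt_12_general {P : Type*} [Fintype P] [PartialOrder P]
    (Dmeet : P → P → ℝ) (Δmeet : ℝ)
    (hDmeet : ∀ x y : P, Dmeet x y =
      ({w | w ≤ x ∧ w ≤ y}.ncard : ℝ) -
        sSup ((fun z => ({w | w ≤ z}.ncard : ℝ)) ''
          {z | z ≤ x ∧ z ≤ y ∧ ∀ w : P, w ≤ x → w ≤ y → z ≤ w → z = w}))
    (hΔmeet : Δmeet = sSup {r | ∃ x y : P, Dmeet x y = r})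
    (hΔ : Δmeet ≤ 1) :
    Monotone (fun x : P => ({w | w ≤ x}.ncard : ℝ)) ∧
    (∀ x y z : P, x ≤ z → y ≤ z →
      ({w | w ≤ x}.ncard : ℝ) + ({w | w ≤ y}.ncard : ℝ) ≤
        sSup ((fun w => ({w' | w' ≤ w}.ncard : ℝ)) '' {w | w ≤ x ∧ w ≤ y}) +
          ({w | w ≤ z}.ncard : ℝ)) := by
  refine ⟨monotone_ncard_Iic, fun x y z hxz hyz => ?_⟩
  have hbdd : BddAbove ((fun w => ({w' | w' ≤ w}.ncard : ℝ)) '' {w | w ≤ x ∧ w ≤ y}) :=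
    (toFinite _).bddAbove
  have hDbdd : BddAbove {r | ∃ a b : P, Dmeet a b = r} :=
    ((finite_range (Function.uncurry Dmeet)).subset <| by
      rintro _ ⟨a, b, rfl⟩
      exact ⟨(a, b), rfl⟩).bddAbove
  have hD : Dmeet x y ≤ 1 := hΔ.trans' (hΔmeet ▸ le_csSup hDbdd ⟨x, y, rfl⟩)
  have hmax : sSup ((fun z => ({w | w ≤ z}.ncard : ℝ)) ''
        {z | z ≤ x ∧ z ≤ y ∧ ∀ w : P, w ≤ x → w ≤ y → z ≤ w → z = w}) ≤
      sSup ((fun w => ({w' | w' ≤ w}.ncard : ℝ)) '' {w | w ≤ x ∧ w ≤ y}) :=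
    Real.sSup_le_sSup_of_nonneg (image_mono fun w hw => ⟨hw.1, hw.2.1⟩) hbdd
      (forall_mem_image.2 fun _ _ => Nat.cast_nonneg _)
  refine ncard_Iic_add_ncard_Iic_le hxz hyz (fun w hwx hwy => le_csSup hbdd ⟨w, ⟨hwx, hwy⟩, rfl⟩) ?_
  change ({w | w ≤ x ∧ w ≤ y}.ncard : ℝ) ≤ _
  linarith [hDmeet x y]

/-- If `P` is a finite bounded poset with `Δ_∧(P) ≤ 1`, then
`v x = |↓x|` is an isotone lower valuation on `P`. -/
theorem stmt_12 {P : Type*} [Fintype P] [PartialOrder P] [BoundedOrder P]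
    (Dmeet : P → P → ℝ) (Δmeet : ℝ)
    (hDmeet : ∀ x y : P, Dmeet x y =
      ({w | w ≤ x ∧ w ≤ y}.ncard : ℝ) -
        sSup ((fun z => ({w | w ≤ z}.ncard : ℝ)) ''
          {z | z ≤ x ∧ z ≤ y ∧ ∀ w : P, w ≤ x → w ≤ y → z ≤ w → z = w}))
    (hΔmeet : Δmeet = sSup {r | ∃ x y : P, Dmeet x y = r})
    (hΔ : Δmeet ≤ 1) :
    Monotone (fun x : P => ({w | w ≤ x}.ncard : ℝ)) ∧
    (∀ x y z : P, x ≤ z → y ≤ z →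
      ({w | w ≤ x}.ncard : ℝ) + ({w | w ≤ y}.ncard : ℝ) ≤
        sSup ((fun w => ({w' | w' ≤ w}.ncard : ℝ)) '' {w | w ≤ x ∧ w ≤ y}) +
          ({w | w ≤ z}.ncard : ℝ)) :=
  stmt_12_general Dmeet Δmeet hDmeet hΔmeet hΔ
end

section
/- Let P be a finite bounded partially ordered set with Δ_∨(P) ≤ 1. Then v(x) = |↑x| is an antitone lower valuation on P: for all x, y, z ∈ P with z ≤ x and z ≤ y, |↑x| + |↑y| ≤ |↑z| + max{|↑w| : x ≤ w and y ≤ w}. -/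
/-!
Write `↑x` for `Ici x`. If `z < x` and `z < y`, then `z ∈ ↑z \ (↑x ∪ ↑y)`, so inclusion–exclusion
gives `|↑x| + |↑y| < |↑z| + |↑x ∩ ↑y|`. The hypothesis `Δ_∨ ≤ 1` supplies a minimal upper bound `m`
of `x` and `y` with `|↑x ∩ ↑y| ≤ |↑m| + 1`, and `|↑m|` is at most the maximum over all upper bounds.
If instead `z = x` (or `z = y`), the upper bound `y` (or `x`) itself gives the inequality.
-/

open Set

section UpperSetCardinality

variable {P : Type*} [PartialOrder P] [Finite P]

lemma antitone_ncard_Ici : Antitone fun x : P => (Ici x).ncard :=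
  fun _ _ hab => ncard_le_ncard (Ici_subset_Ici.2 hab)

lemma ncard_Ici_add_ncard_Ici_lt {x y z : P} (hzx : z < x) (hzy : z < y) :
    (Ici x).ncard + (Ici y).ncard < (Ici z).ncard + (Ici x ∩ Ici y).ncard := by
  have hssub : Ici x ∪ Ici y ⊂ Ici z := by
    refine ssubset_of_subset_not_subset
      (union_subset (Ici_subset_Ici.2 hzx.le) (Ici_subset_Ici.2 hzy.le)) fun h => ?_
    rcases h self_mem_Ici with hz | hz
    exacts [hzx.not_ge hz, hzy.not_ge hz]
  rw [← ncard_union_add_ncard_inter (Ici x) (Ici y)]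
  have := ncard_lt_ncard hssub
  omega

lemma exists_upperBound_ncard_Ici_add_ncard_Ici_le {x y z m : P} (hzx : z ≤ x) (hzy : z ≤ y)
    (hxm : x ≤ m) (hym : y ≤ m) (hm : (Ici x ∩ Ici y).ncard ≤ (Ici m).ncard + 1) :
    ∃ w, x ≤ w ∧ y ≤ w ∧ (Ici x).ncard + (Ici y).ncard ≤ (Ici z).ncard + (Ici w).ncard := by
  rcases hzx.eq_or_lt with rfl | hzx
  · exact ⟨y, hzy, le_rfl, le_rfl⟩
  rcases hzy.eq_or_lt with rfl | hzy
  · exact ⟨x, le_rfl, hzx.le, (add_comm _ _).le⟩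
  refine ⟨m, hxm, hym, ?_⟩
  have := ncard_Ici_add_ncard_Ici_lt hzx hzy
  omega

lemma nonempty_minimal_upperBounds [OrderTop P] (x y : P) :
    {z | x ≤ z ∧ y ≤ z ∧ ∀ w : P, x ≤ w → y ≤ w → w ≤ z → z = w}.Nonempty := by
  obtain ⟨m, hm, hmin⟩ := (toFinite {w : P | x ≤ w ∧ y ≤ w}).exists_minimal ⟨⊤, le_top, le_top⟩
  exact ⟨m, hm.1, hm.2, fun w hxw hyw hwm => le_antisymm (hmin ⟨hxw, hyw⟩ hwm) hwm⟩

end UpperSetCardinality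

/-- If `P` is a finite bounded poset with `Δ_∨(P) ≤ 1`, then
`v x = |↑x|` is an antitone lower valuation on `P`. -/
theorem stmt_13 {P : Type*} [Fintype P] [PartialOrder P] [BoundedOrder P]
    (Djoin : P → P → ℝ) (Δjoin : ℝ)
    (hDjoin : ∀ x y : P, Djoin x y =
      ({w | x ≤ w ∧ y ≤ w}.ncard : ℝ) -
        sInf ((fun z => ({w | z ≤ w}.ncard : ℝ)) ''
          {z | x ≤ z ∧ y ≤ z ∧ ∀ w : P, x ≤ w → y ≤ w → w ≤ z → z = w}))
    (hΔjoin : Δjoin = sSup {r | ∃ x y : P, Djoin x y = r})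
    (hΔ : Δjoin ≤ 1) :
    Antitone (fun x : P => ({w | x ≤ w}.ncard : ℝ)) ∧
    (∀ x y z : P, z ≤ x → z ≤ y →
      ({w | x ≤ w}.ncard : ℝ) + ({w | y ≤ w}.ncard : ℝ) ≤
        ({w | z ≤ w}.ncard : ℝ) +
          sSup ((fun w => ({w' | w ≤ w'}.ncard : ℝ)) '' {w | x ≤ w ∧ y ≤ w})) := by
  refine ⟨fun a b hab => Nat.cast_le.2 (antitone_ncard_Ici hab), fun x y z hzx hzy => ?_⟩
  obtain ⟨m, ⟨hxm, hym, -⟩, hm⟩ := ((nonempty_minimal_upperBounds x y).image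
    fun z => ({w | z ≤ w}.ncard : ℝ)).csInf_mem ((toFinite _).image _)
  have hDbdd : BddAbove {r | ∃ x y : P, Djoin x y = r} :=
    (finite_range fun p : P × P => Djoin p.1 p.2).bddAbove.mono <| by
      rintro _ ⟨a, b, rfl⟩
      exact ⟨(a, b), rfl⟩
  have hDxy : Djoin x y ≤ 1 := (le_csSup hDbdd ⟨x, y, rfl⟩).trans (hΔjoin ▸ hΔ)
  rw [hDjoin, ← hm] at hDxy
  beta_reduce at hDxy
  have hgap : ({w | x ≤ w ∧ y ≤ w}.ncard : ℝ) ≤ {w | m ≤ w}.ncard + 1 := by linarith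
  obtain ⟨w, hxw, hyw, hval⟩ :=
    exists_upperBound_ncard_Ici_add_ncard_Ici_le hzx hzy hxm hym (by exact_mod_cast hgap)
  have hvalR : ((Ici x).ncard : ℝ) + (Ici y).ncard ≤ (Ici z).ncard + (Ici w).ncard := by
    exact_mod_cast hval
  have hsup : ((Ici w).ncard : ℝ) ≤
      sSup ((fun w => ({w' | w ≤ w'}.ncard : ℝ)) '' {w | x ≤ w ∧ y ≤ w}) :=
    le_csSup ((toFinite _).bddAbove) ⟨w, ⟨hxw, hyw⟩, rfl⟩
  exact hvalR.trans (add_le_add le_rfl hsup)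
end

section
/- Let G be a group and let ℒ be the set of finite subgroups of G. Then d(X,Y) = log(|X| · |Y|) − 2·log|X ∩ Y| defines a metric on ℒ: for all finite subgroups X, Y, Z of G, d(X,Y) ≥ 0, d(X,Y) = d(Y,X), d(X,Z) ≤ d(X,Y) + d(Y,Z), and d(X,Y) = 0 if and only if X = Y. -/
/-!
By Lagrange, `|X| = |X ⊓ Y| [X : X ⊓ Y]`, so the distance equals `log ([X : X ⊓ Y] [Y : X ⊓ Y])`
(`[X : X ⊓ Y]` is `Y.relIndex X`), which makes sense, and is a metric, on any commensurability
class. It vanishes exactly when both indices are `1`, i.e. `X = Y`, and the triangle inequality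
comes from
`[X : X ⊓ Z] ≤ [X : X ⊓ Y ⊓ Z] = [X : X ⊓ Y] [X ⊓ Y : X ⊓ Y ⊓ Z] ≤ [X : X ⊓ Y] [Y : Y ⊓ Z]`.
-/

namespace Subgroup

variable {G : Type*} [Group G] {H K L : Subgroup G}

theorem relIndex_le_relIndex_mul_relIndex (hHK : H.relIndex K ≠ 0) (hKL : K.relIndex L ≠ 0) :
    H.relIndex L ≤ H.relIndex K * K.relIndex L := by
  have hle : H.relIndex (K ⊓ L) ≤ H.relIndex K := relIndex_le_of_le_right inf_le_left hHK
  have hprod := relIndex_inf_mul_relIndex H K L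
  have hne : (H ⊓ K).relIndex L ≠ 0 := by
    rw [← hprod]
    exact mul_ne_zero (mt (relIndex_eq_zero_of_le_right inf_le_left) hHK) hKL
  calc H.relIndex L ≤ (H ⊓ K).relIndex L := relIndex_le_of_le_left inf_le_left hne
    _ = H.relIndex (K ⊓ L) * K.relIndex L := hprod.symm
    _ ≤ H.relIndex K * K.relIndex L := Nat.mul_le_mul_right _ hle

variable (H K) in
theorem card_inf_mul_relIndex :
    Nat.card (H ⊓ K : Subgroup G) * K.relIndex H = Nat.card H := by
  simpa [relIndex_bot_left, inf_relIndex_left] using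
    relIndex_mul_relIndex (⊥ : Subgroup G) (H ⊓ K) H bot_le inf_le_left

theorem relIndex_ne_zero_of_finite [Finite K] : H.relIndex K ≠ 0 :=
  ne_zero_of_dvd_ne_zero Nat.card_pos.ne' (relIndex_dvd_card H K)

theorem commensurable_of_finite [Finite H] [Finite K] : Commensurable H K :=
  ⟨relIndex_ne_zero_of_finite, relIndex_ne_zero_of_finite⟩

noncomputable def indexDist (H K : Subgroup G) : ℝ :=
  Real.log (K.relIndex H * H.relIndex K : ℕ)

theorem indexDist_nonneg : 0 ≤ indexDist H K :=
  Real.log_natCast_nonneg _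

variable (H K) in
theorem indexDist_comm : indexDist H K = indexDist K H := by
  rw [indexDist, indexDist, mul_comm]

theorem indexDist_eq_zero_iff (h : Commensurable H K) : indexDist H K = 0 ↔ H = K := by
  have hneg : ((K.relIndex H * H.relIndex K : ℕ) : ℝ) ≠ -1 :=
    (neg_one_lt_zero.trans_le (Nat.cast_nonneg _)).ne'
  rw [indexDist, Real.log_eq_zero, Nat.cast_eq_zero, Nat.cast_eq_one,
    or_iff_right (mul_ne_zero h.2 h.1), or_iff_left hneg, mul_eq_one, relIndex_eq_one,
    relIndex_eq_one, le_antisymm_iff, and_comm]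

theorem indexDist_triangle (hHK : Commensurable H K) (hKL : Commensurable K L) :
    indexDist H L ≤ indexDist H K + indexDist K L := by
  have hHL := hHK.trans hKL
  have hprod : L.relIndex H * H.relIndex L
      ≤ K.relIndex H * H.relIndex K * (L.relIndex K * K.relIndex L) :=
    calc L.relIndex H * H.relIndex L
        ≤ (L.relIndex K * K.relIndex H) * (H.relIndex K * K.relIndex L) :=
          Nat.mul_le_mul (relIndex_le_relIndex_mul_relIndex hKL.2 hHK.2)
            (relIndex_le_relIndex_mul_relIndex hHK.1 hKL.1)
      _ = K.relIndex H * H.relIndex K * (L.relIndex K * K.relIndex L) := by ring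
  rw [indexDist, indexDist, indexDist,
    ← Real.log_mul (by exact_mod_cast mul_ne_zero hHK.2 hHK.1)
      (by exact_mod_cast mul_ne_zero hKL.2 hKL.1)]
  exact Real.log_le_log (by exact_mod_cast Nat.pos_of_ne_zero (mul_ne_zero hHL.2 hHL.1))
    (by exact_mod_cast hprod)

variable (H K) in
theorem indexDist_eq_log_card [Finite H] [Finite K] :
    indexDist H K =
      Real.log (Nat.card H * Nat.card K : ℝ) - 2 * Real.log (Nat.card (H ⊓ K : Subgroup G)) := by
  have hH := card_inf_mul_relIndex H K
  have hK : Nat.card (H ⊓ K : Subgroup G) * H.relIndex K = Nat.card K := by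
    rw [inf_comm]
    exact card_inf_mul_relIndex K H
  have hc : (Nat.card (H ⊓ K : Subgroup G) : ℝ) ≠ 0 := by
    exact_mod_cast left_ne_zero_of_mul (hH ▸ Nat.card_pos.ne')
  have ha : (K.relIndex H : ℝ) ≠ 0 := by exact_mod_cast relIndex_ne_zero_of_finite
  have hb : (H.relIndex K : ℝ) ≠ 0 := by exact_mod_cast relIndex_ne_zero_of_finite
  rw [indexDist, ← hH, ← hK]
  push_cast
  rw [Real.log_mul ha hb, Real.log_mul (mul_ne_zero hc ha) (mul_ne_zero hc hb), Real.log_mul hc ha,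
    Real.log_mul hc hb]
  ring

end Subgroup

/-- On the collection of finite subgroups of a group `G`,
`d(X,Y) = log(|X|·|Y|) - 2·log|X ∩ Y|` is a metric. -/
theorem stmt_17 {G : Type*} [Group G]
    (d : Subgroup G → Subgroup G → ℝ)
    (hd : ∀ X Y : Subgroup G,
      d X Y = Real.log ((Nat.card X : ℝ) * (Nat.card Y : ℝ)) -
        2 * Real.log (Nat.card (X ⊓ Y : Subgroup G) : ℝ)) :
    ∀ X Y Z : Subgroup G, (X : Set G).Finite → (Y : Set G).Finite →
      (Z : Set G).Finite →
      0 ≤ d X Y ∧ d X Y = d Y X ∧ d X Z ≤ d X Y + d Y Z ∧ (d X Y = 0 ↔ X = Y) := by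
  intro X Y Z hX hY hZ
  have := hX.to_subtype
  have := hY.to_subtype
  have := hZ.to_subtype
  have hd_indexDist : ∀ (H K : Subgroup G) [Finite H] [Finite K], d H K = Subgroup.indexDist H K :=
    fun H K _ _ => (hd H K).trans (Subgroup.indexDist_eq_log_card H K).symm
  rw [hd_indexDist X Y, hd_indexDist Y X, hd_indexDist X Z, hd_indexDist Y Z]
  exact ⟨Subgroup.indexDist_nonneg, Subgroup.indexDist_comm X Y,
    Subgroup.indexDist_triangle Subgroup.commensurable_of_finite Subgroup.commensurable_of_finite,
    Subgroup.indexDist_eq_zero_iff Subgroup.commensurable_of_finite⟩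
end

section
/- Let P be a finite partially ordered set. (i) If u : P → ℝ is an isotone upper valuation with u(x) > 0 for all x ∈ P, then ℓ(x) = log u(x) is an isotone upper valuation: for all x, y, z ∈ P with z ≤ x and z ≤ y, inf{log u(w) : x ≤ w and y ≤ w} + log u(z) ≤ log u(x) + log u(y). (ii) If u : P → ℝ is an antitone upper valuation with u(x) > 0 for all x ∈ P, then ℓ(x) = log u(x) is an antitone upper valuation: for all x, y, z ∈ P with x ≤ z and y ≤ z, inf{log u(w) : w ≤ x and w ≤ y} + log u(z) ≤ log u(x) + log u(y). -/
/-! Since `log` turns products into sums, the claim reduces to `u w * u z ≤ u x * u y` for a join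
candidate `w` attaining the infimum (a finite poset attains it). From `u w + u z ≤ u x + u y` and
`u z ≤ u x, u y` this follows by `(u x - u z) (u y - u z) ≥ 0`. The antitone case is the isotone
case on the order dual. -/

open Real

lemma Real.log_add_log_le_log_add_log {a b c d : ℝ} (ha : 0 < a) (hd : 0 < d)
    (h : a + d ≤ b + c) (hdb : d ≤ b) (hdc : d ≤ c) :
    log a + log d ≤ log b + log c := by
  rw [← log_mul ha.ne' hd.ne', ← log_mul (hd.trans_le hdb).ne' (hd.trans_le hdc).ne']
  refine log_le_log (by positivity) ?_
  nlinarith [mul_nonneg (sub_nonneg.2 hdb) (sub_nonneg.2 hdc)]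

lemma Set.Finite.sInf_image_log_add_log_le {ι : Type*} {s : Set ι} (hs : s.Finite)
    (hne : s.Nonempty) {u : ι → ℝ} (hu : ∀ i ∈ s, 0 < u i) {b c d : ℝ} (hd : 0 < d)
    (h : sInf (u '' s) + d ≤ b + c) (hdb : d ≤ b) (hdc : d ≤ c) :
    sInf ((fun i => log (u i)) '' s) + log d ≤ log b + log c := by
  obtain ⟨i, hi, hmin⟩ := (hne.image u).csInf_mem (hs.image u)
  have hle : sInf ((fun i => log (u i)) '' s) ≤ log (u i) :=
    csInf_le (hs.image _).bddBelow ⟨i, hi, rfl⟩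
  have := log_add_log_le_log_add_log (hu i hi) hd (hmin ▸ h) hdb hdc
  linarith

lemma Monotone.log_isUpperValuation {P : Type*} [Finite P] [PartialOrder P] {u : P → ℝ}
    (hmono : Monotone u) (hpos : ∀ x, 0 < u x) (hub : ∀ x y : P, ∃ w, x ≤ w ∧ y ≤ w)
    (hval : ∀ x y z : P, z ≤ x → z ≤ y → sInf (u '' {w | x ≤ w ∧ y ≤ w}) + u z ≤ u x + u y) :
    Monotone (fun x => log (u x)) ∧
      ∀ x y z : P, z ≤ x → z ≤ y →
        sInf ((fun w => log (u w)) '' {w | x ≤ w ∧ y ≤ w}) + log (u z) ≤ log (u x) + log (u y) :=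
  ⟨fun a _ hab => log_le_log (hpos a) (hmono hab), fun x y z hzx hzy =>
    (Set.toFinite _).sInf_image_log_add_log_le (hub x y) (fun w _ => hpos w) (hpos z)
      (hval x y z hzx hzy) (hmono hzx) (hmono hzy)⟩

/-- On a finite poset `P`: (i) if `u` is a strictly positive isotone
upper valuation then `log ∘ u` is an isotone upper valuation; (ii) if `u` is a
strictly positive antitone upper valuation then `log ∘ u` is an antitone upper
valuation. -/
theorem stmt_18 {P : Type*} [Fintype P] [PartialOrder P] :
    (∀ u : P → ℝ, Monotone u → (∀ x : P, 0 < u x) →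
      (∀ x y : P, ∃ w : P, x ≤ w ∧ y ≤ w) →
      (∀ x y z : P, z ≤ x → z ≤ y →
        sInf (u '' {w | x ≤ w ∧ y ≤ w}) + u z ≤ u x + u y) →
      (Monotone (fun x : P => Real.log (u x)) ∧
       ∀ x y z : P, z ≤ x → z ≤ y →
        sInf ((fun w => Real.log (u w)) '' {w | x ≤ w ∧ y ≤ w}) + Real.log (u z) ≤
          Real.log (u x) + Real.log (u y))) ∧
    (∀ u : P → ℝ, Antitone u → (∀ x : P, 0 < u x) →
      (∀ x y : P, ∃ w : P, w ≤ x ∧ w ≤ y) →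
      (∀ x y z : P, x ≤ z → y ≤ z →
        sInf (u '' {w | w ≤ x ∧ w ≤ y}) + u z ≤ u x + u y) →
      (Antitone (fun x : P => Real.log (u x)) ∧
       ∀ x y z : P, x ≤ z → y ≤ z →
        sInf ((fun w => Real.log (u w)) '' {w | w ≤ x ∧ w ≤ y}) + Real.log (u z) ≤
          Real.log (u x) + Real.log (u y))) :=
  ⟨fun _ hmono hpos hub hval => hmono.log_isUpperValuation hpos hub hval,
    fun _ hanti hpos hlb hval =>
      (Monotone.log_isUpperValuation (P := Pᵒᵈ) hanti.dual_left hpos hlb hval).imp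
        monotone_comp_ofDual_iff.1 id⟩
end

section
/- Let P be a finite partially ordered set. (i) If u : P → ℝ is an isotone upper valuation, K > 0, and A ∈ ℝ satisfies K·u(x) + A > 0 for all x ∈ P, then L(x) = log(K·u(x) + A) is an isotone upper valuation. (ii) If v : P → ℝ is an isotone lower valuation, K < 0, and A ∈ ℝ satisfies K·v(x) + A > 0 for all x ∈ P, then L'(x) = −log(K·v(x) + A) is an isotone lower valuation: for all x, y, z ∈ P with x ≤ z and y ≤ z, L'(x) + L'(y) ≤ sup{L'(w) : w ≤ x and w ≤ y} + L'(z). -/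
/-!
On a finite poset the infimum in the upper valuation inequality is attained, so `u` is an upper
valuation iff whenever `z ≤ x, y` some common upper bound `w` of `x, y` has
`u w + u z ≤ u x + u y`. This form survives affine maps with nonnegative slope and, for positive
monotone `u`, the logarithm: `a + d ≤ b + c` with `0 ≤ d ≤ b, c` forces `a * d ≤ b * c`, as
`b * c - a * d ≥ (b - d) * (c - d)`. Lower valuations are negated upper valuations on the order
dual, which turns a negative slope into a positive one.
-/

open OrderDual

theorem mul_le_mul_of_add_le_add {a b c d : ℝ} (hd : 0 ≤ d) (hdb : d ≤ b) (hdc : d ≤ c)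
    (h : a + d ≤ b + c) : a * d ≤ b * c := by
  nlinarith [mul_nonneg (sub_nonneg.2 hdb) (sub_nonneg.2 hdc)]

theorem Real.log_add_log_le_of_add_le_add {a b c d : ℝ} (ha : 0 < a) (hd : 0 < d)
    (hdb : d ≤ b) (hdc : d ≤ c) (h : a + d ≤ b + c) :
    Real.log a + Real.log d ≤ Real.log b + Real.log c := by
  rw [← Real.log_mul ha.ne' hd.ne', ← Real.log_mul (hd.trans_le hdb).ne' (hd.trans_le hdc).ne']
  exact Real.log_le_log (by positivity) (mul_le_mul_of_add_le_add hd.le hdb hdc h)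

theorem Monotone.log_of_pos {P : Type*} [Preorder P] {g : P → ℝ} (hg : Monotone g)
    (hpos : ∀ x, 0 < g x) : Monotone fun x => Real.log (g x) :=
  fun _ _ hab => Real.log_le_log (hpos _) (hg hab)

section Valuation

variable {P : Type*}

def IsUpperValuation [Preorder P] (u : P → ℝ) : Prop :=
  (∀ x y : P, ∃ w, x ≤ w ∧ y ≤ w) ∧
    ∀ x y z : P, z ≤ x → z ≤ y → sInf (u '' {w | x ≤ w ∧ y ≤ w}) + u z ≤ u x + u y

def IsLowerValuation [Preorder P] (v : P → ℝ) : Prop :=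
  (∀ x y : P, ∃ w, w ≤ x ∧ w ≤ y) ∧
    ∀ x y z : P, x ≤ z → y ≤ z → v x + v y ≤ sSup (v '' {w | w ≤ x ∧ w ≤ y}) + v z

variable [Preorder P]

theorem isUpperValuation_neg_comp_ofDual_iff {v : P → ℝ} :
    IsUpperValuation (fun w : Pᵒᵈ => -v (ofDual w)) ↔ IsLowerValuation v := by
  have himage (x y : P) : (fun w : Pᵒᵈ => -v (ofDual w)) '' {w | toDual x ≤ w ∧ toDual y ≤ w} =
      -(v '' {w | w ≤ x ∧ w ≤ y}) := by
    rw [← Set.image_neg_eq_neg, Set.image_image]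
    rfl
  simp only [IsUpperValuation, IsLowerValuation, OrderDual.forall, toDual_le_toDual, himage,
    Real.sInf_neg, ofDual_toDual]
  refine and_congr Iff.rfl (forall₃_congr fun x y z => imp_congr_right fun _ =>
    imp_congr_right fun _ => ?_)
  constructor <;> intro h <;> linarith

variable [Finite P] {u : P → ℝ}

theorem IsUpperValuation.exists_add_le (hu : IsUpperValuation u) {x y z : P} (hzx : z ≤ x)
    (hzy : z ≤ y) : ∃ w, x ≤ w ∧ y ≤ w ∧ u w + u z ≤ u x + u y := by
  obtain ⟨w, hw, hmin⟩ : sInf (u '' {w | x ≤ w ∧ y ≤ w}) ∈ u '' {w | x ≤ w ∧ y ≤ w} :=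
    (Set.Nonempty.image u (hu.1 x y)).csInf_mem ((Set.toFinite _).image u)
  exact ⟨w, hw.1, hw.2, hmin ▸ hu.2 x y z hzx hzy⟩

theorem IsUpperValuation.of_exists_add_le (hub : ∀ x y : P, ∃ w, x ≤ w ∧ y ≤ w)
    (h : ∀ x y z : P, z ≤ x → z ≤ y → ∃ w, x ≤ w ∧ y ≤ w ∧ u w + u z ≤ u x + u y) :
    IsUpperValuation u := by
  refine ⟨hub, fun x y z hzx hzy => ?_⟩
  obtain ⟨w, hxw, hyw, hw⟩ := h x y z hzx hzy
  have : sInf (u '' {w | x ≤ w ∧ y ≤ w}) ≤ u w :=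
    csInf_le ((Set.toFinite _).image u).bddBelow ⟨w, ⟨hxw, hyw⟩, rfl⟩
  linarith

theorem IsUpperValuation.const_mul_add (hu : IsUpperValuation u) {K : ℝ} (hK : 0 ≤ K) (A : ℝ) :
    IsUpperValuation (fun x => K * u x + A) := by
  refine .of_exists_add_le hu.1 fun x y z hzx hzy => ?_
  obtain ⟨w, hxw, hyw, hw⟩ := hu.exists_add_le hzx hzy
  exact ⟨w, hxw, hyw, by nlinarith⟩

theorem IsUpperValuation.log (hu : IsUpperValuation u) (hmono : Monotone u)
    (hpos : ∀ x, 0 < u x) : IsUpperValuation (fun x => Real.log (u x)) := by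
  refine .of_exists_add_le hu.1 fun x y z hzx hzy => ?_
  obtain ⟨w, hxw, hyw, hw⟩ := hu.exists_add_le hzx hzy
  exact ⟨w, hxw, hyw,
    Real.log_add_log_le_of_add_le_add (hpos w) (hpos z) (hmono hzx) (hmono hzy) hw⟩


theorem IsUpperValuation.log_const_mul_add (hu : IsUpperValuation u) (hmono : Monotone u)
    {K A : ℝ} (hK : 0 ≤ K) (hpos : ∀ x, 0 < K * u x + A) :
    Monotone (fun x => Real.log (K * u x + A)) ∧
      IsUpperValuation (fun x => Real.log (K * u x + A)) :=
  have hg : Monotone (fun x => K * u x + A) := (hmono.const_mul hK).add_const A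
  ⟨hg.log_of_pos hpos, (hu.const_mul_add hK A).log hg hpos⟩

theorem IsLowerValuation.neg_log_const_mul_add {v : P → ℝ} (hv : IsLowerValuation v)
    (hmono : Monotone v) {K A : ℝ} (hK : K ≤ 0) (hpos : ∀ x, 0 < K * v x + A) :
    Monotone (fun x => -Real.log (K * v x + A)) ∧
      IsLowerValuation (fun x => -Real.log (K * v x + A)) := by
  set g : Pᵒᵈ → ℝ := fun w => K * v (ofDual w) + A
  have hg : IsUpperValuation g := by
    simpa only [neg_mul_neg] using
      (isUpperValuation_neg_comp_ofDual_iff.2 hv).const_mul_add (neg_nonneg.2 hK) A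
  have hg_mono : Monotone g := (hmono.dual_left.const_mul_of_nonpos hK).add_const A
  have hlog_mono := hg_mono.log_of_pos (fun w => hpos (ofDual w))
  refine ⟨fun a b hab => neg_le_neg (hlog_mono (toDual_le_toDual.2 hab)), ?_⟩
  rw [← isUpperValuation_neg_comp_ofDual_iff]
  simpa only [neg_neg] using hg.log hg_mono (fun w => hpos (ofDual w))

end Valuation

/-- On a finite poset `P`: (i) if `u` is an isotone upper valuation,
`K > 0`, and `K·u(x) + A > 0` for all `x`, then `L x = log (K·u(x) + A)` is an
isotone upper valuation; (ii) if `v` is an isotone lower valuation, `K < 0`, and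
`K·v(x) + A > 0` for all `x`, then `L' x = -log (K·v(x) + A)` is an isotone lower
valuation. -/
theorem stmt_19 {P : Type*} [Fintype P] [PartialOrder P] :
    (∀ (u : P → ℝ) (K A : ℝ), Monotone u → 0 < K → (∀ x : P, 0 < K * u x + A) →
      (∀ x y : P, ∃ w : P, x ≤ w ∧ y ≤ w) →
      (∀ x y z : P, z ≤ x → z ≤ y →
        sInf (u '' {w | x ≤ w ∧ y ≤ w}) + u z ≤ u x + u y) →
      (Monotone (fun x : P => Real.log (K * u x + A)) ∧
       ∀ x y z : P, z ≤ x → z ≤ y →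
        sInf ((fun w => Real.log (K * u w + A)) '' {w | x ≤ w ∧ y ≤ w}) +
            Real.log (K * u z + A) ≤
          Real.log (K * u x + A) + Real.log (K * u y + A))) ∧
    (∀ (v : P → ℝ) (K A : ℝ), Monotone v → K < 0 → (∀ x : P, 0 < K * v x + A) →
      (∀ x y : P, ∃ w : P, w ≤ x ∧ w ≤ y) →
      (∀ x y z : P, x ≤ z → y ≤ z →
        v x + v y ≤ sSup (v '' {w | w ≤ x ∧ w ≤ y}) + v z) →
      (Monotone (fun x : P => -Real.log (K * v x + A)) ∧
       ∀ x y z : P, x ≤ z → y ≤ z →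
        (-Real.log (K * v x + A)) + (-Real.log (K * v y + A)) ≤
          sSup ((fun w => -Real.log (K * v w + A)) '' {w | w ≤ x ∧ w ≤ y}) +
            (-Real.log (K * v z + A)))) := by
  refine ⟨fun u K A hmono hK hpos hub hval => ?_, fun v K A hmono hK hpos hlb hval => ?_⟩
  · obtain ⟨hlog_mono, hlog⟩ :=
      IsUpperValuation.log_const_mul_add ⟨hub, hval⟩ hmono hK.le hpos
    exact ⟨hlog_mono, hlog.2⟩
  · obtain ⟨hlog_mono, hlog⟩ :=
      IsLowerValuation.neg_log_const_mul_add ⟨hlb, hval⟩ hmono hK.le hpos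
    exact ⟨hlog_mono, hlog.2⟩
end
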